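/- arXiv:math/0210208 — 2 statements merged into one kernel-verified Lean document; each statement's English description precedes it below -/
import Mathlib

section
/- For a positive integer n, Σ_{k,p ≥ 0} B(n,p,k)·x^p·y^k = 2^{-n}·[((1+x)(1+y) + √D)^n + ((1+x)(1+y) - √D)^n], where D = (1+x)²(1+y)² - 4x(1+y), B(n,p,k) = (n/k)·Σ_{r≥0} C(p,r)·C(n-p,r)·C(n-r-1,k-r-1) for k ≥ 1, and B(n,p,0) is defined by B(n,0,0) = B(n,n,0) = 1 and B(n,p,0) = 0 otherwise. -/
open Finset

/-- Binomial coefficient `C(a,b)` for integers, with `C(a,b) = 0` unless `0 ≤ b ≤ a`. -/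
def C (a b : ℤ) : ℚ := if 0 ≤ b ∧ b ≤ a then (Nat.choose a.toNat b.toNat : ℚ) else 0

/-- `B(n,p,k) = (n/k) · Σ_{r≥0} C(p,r)·C(n-p,r)·C(n-r-1,k-r-1)`. -/
def B (n p k : ℕ) : ℚ :=
  ((n : ℚ) / k) * ∑ r ∈ range (n + 1),
    C p r * C ((n : ℤ) - p) r * C ((n : ℤ) - r - 1) ((k : ℤ) - r - 1)

/-- `B` extended to `k = 0` by `B(n,0,0) = B(n,n,0) = 1` and `B(n,p,0) = 0` otherwise. -/
def Bfull (n p k : ℕ) : ℚ :=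
  if k = 0 then (if p = 0 ∨ p = n then 1 else 0) else B n p k

/-!
Fix `x` and read both sides as polynomials in `y`: the left side `F_n`, and the right side
`V_n = α^n + β^n`, the Lucas sequence of `P = (1+x)(1+y)` and `Q = x(1+y)`. Both have constant
term `1 + x^n`, so it suffices to compare `y`-derivatives. Clearing the factor `n/k` gives
`y F_n' = n G_n` with `G_n = Σ C(p,r) C(n-p,r) C(n-r-1,k-r-1) x^p y^k`. Summing over `k` first,
`(1+y) G_n = y H_n` with `H_n = Σ_{r,p} C(p,r) C(n-p,r) x^p y^r (1+y)^(n-r)`, and Pascal's rule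
shows that `H_n` obeys the Lucas recurrence, so `H_n = U_{n+1}`. On the other side `(1+y) ∂_y`
fixes `P` and `Q`, which gives `(1+y) V_n' = n U_{n+1}`.
-/

open Polynomial hiding C

section Lucas

variable {R : Type*} [CommRing R]

def lucasU (a b : R) : ℕ → R
  | 0 => 0
  | 1 => 1
  | n + 2 => a * lucasU a b (n + 1) - b * lucasU a b n

def lucasV (a b : R) : ℕ → R
  | 0 => 2
  | 1 => a
  | n + 2 => a * lucasV a b (n + 1) - b * lucasV a b n

theorem map_lucasV {S : Type*} [CommRing S] (f : R →+* S) (a b : R) :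
    ∀ n, f (lucasV a b n) = lucasV (f a) (f b) n
  | 0 => map_ofNat f 2
  | 1 => rfl
  | n + 2 => by simp [lucasV, map_lucasV f a b n, map_lucasV f a b (n + 1)]

theorem lucasV_eq_pow_add_pow {a b α β : R} (hsum : α + β = a) (hprod : α * β = b) :
    ∀ n, lucasV a b n = α ^ n + β ^ n
  | 0 => by rw [lucasV, pow_zero, pow_zero, one_add_one_eq_two]
  | 1 => by rw [lucasV, pow_one, pow_one, hsum]
  | n + 2 => by
    rw [lucasV, lucasV_eq_pow_add_pow hsum hprod n, lucasV_eq_pow_add_pow hsum hprod (n + 1),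
      ← hsum, ← hprod]
    ring

theorem lucasV_succ_eq_lucasU_sub (a b : R) :
    ∀ n, lucasV a b (n + 1) = lucasU a b (n + 2) - b * lucasU a b n
  | 0 => by simp [lucasU, lucasV]
  | 1 => by
    simp only [lucasU, lucasV]
    ring
  | n + 2 => by
    rw [lucasV, lucasV_succ_eq_lucasU_sub a b n, lucasV_succ_eq_lucasU_sub a b (n + 1)]
    simp only [lucasU]
    ring

theorem mul_derivative_lucasV {P Q e : R[X]} (hP : e * derivative P = P)
    (hQ : e * derivative Q = Q) : ∀ n, e * derivative (lucasV P Q n) = n * lucasU P Q (n + 1)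
  | 0 => by simp [lucasV]
  | 1 => by simp [lucasV, lucasU, hP]
  | n + 2 => by
    have hn := mul_derivative_lucasV hP hQ n
    have hn1 := mul_derivative_lucasV hP hQ (n + 1)
    have hV : P * lucasV P Q (n + 1) - Q * lucasV P Q n =
        P * lucasU P Q (n + 2) - 2 * Q * lucasU P Q (n + 1) := by
      have h := lucasV_succ_eq_lucasU_sub P Q (n + 1)
      rw [lucasV] at h
      rw [h, lucasU]
      ring
    rw [lucasV, lucasU, derivative_sub, derivative_mul, derivative_mul]
    push_cast at hn1 ⊢
    linear_combination lucasV P Q (n + 1) * hP - lucasV P Q n * hQ + P * hn1 - Q * hn + hV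

end Lucas

section Convolution

variable {A : Type*} [CommRing A]

def binomConv (x : A) (m r : ℕ) : A :=
  ∑ ij ∈ antidiagonal m, (ij.1.choose r * ij.2.choose r : A) * x ^ ij.1

theorem binomConv_of_lt (x : A) {m r : ℕ} (h : m < r) : binomConv x m r = 0 :=
  sum_eq_zero fun ij hij => by
    rw [Nat.choose_eq_zero_of_lt ((Nat.antidiagonal.fst_lt hij).trans_le h), Nat.cast_zero,
      zero_mul, zero_mul]

theorem binomConv_succ_zero (x : A) (m : ℕ) :
    binomConv x (m + 1) 0 = 1 + x * binomConv x m 0 := by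
  simp [binomConv, Nat.sum_antidiagonal_succ, mul_sum, pow_succ, mul_comm]

theorem binomConv_add_two_zero (x : A) (m : ℕ) :
    binomConv x (m + 2) 0 = (1 + x) * binomConv x (m + 1) 0 - x * binomConv x m 0 := by
  rw [binomConv_succ_zero x (m + 1), binomConv_succ_zero x m]
  ring

theorem binomConv_add_two_succ (x : A) (m r : ℕ) :
    binomConv x (m + 2) (r + 1) =
      (1 + x) * binomConv x (m + 1) (r + 1) - x * binomConv x m (r + 1) + x * binomConv x m r := by
  set mixed : ℕ → A := fun m =>
    ∑ ij ∈ antidiagonal m, (ij.1.choose (r + 1) * ij.2.choose r : A) * x ^ ij.1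
  have pascal_snd : ∀ m, binomConv x (m + 1) (r + 1) = mixed m + binomConv x m (r + 1) := by
    intro m
    simp only [binomConv, mixed, Nat.sum_antidiagonal_succ', Nat.choose_succ_succ',
      ← sum_add_distrib, Nat.choose_zero_succ, Nat.cast_add, Nat.cast_zero, mul_zero, zero_mul,
      zero_add]
    refine sum_congr rfl fun ij _ => ?_
    ring
  have pascal_fst : mixed (m + 1) = x * binomConv x m r + x * mixed m := by
    simp only [binomConv, mixed, Nat.sum_antidiagonal_succ, Nat.choose_succ_succ', mul_sum,
      ← sum_add_distrib, Nat.choose_zero_succ, Nat.cast_add, Nat.cast_zero, zero_mul, zero_add]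
    refine sum_congr rfl fun ij _ => ?_
    ring
  rw [pascal_snd, pascal_fst, pascal_snd]
  ring

def homogSum (u v : A) (m : ℕ) (f : ℕ → A) : A :=
  ∑ ij ∈ antidiagonal m, f ij.1 * u ^ ij.1 * v ^ ij.2

theorem homogSum_succ (u v : A) (m : ℕ) (f : ℕ → A) :
    homogSum u v (m + 1) f = f 0 * v ^ (m + 1) + u * homogSum u v m (fun r => f (r + 1)) := by
  simp only [homogSum, Nat.sum_antidiagonal_succ, mul_sum, pow_succ]
  congr 1
  · ring
  · exact sum_congr rfl fun ij _ => by ring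

theorem homogSum_succ_of_eq_zero (u v : A) {m : ℕ} {f : ℕ → A} (hf : f (m + 1) = 0) :
    homogSum u v (m + 1) f = v * homogSum u v m f := by
  simp only [homogSum, Nat.sum_antidiagonal_succ', hf, mul_sum, pow_succ, zero_mul, zero_add]
  exact sum_congr rfl fun ij _ => by ring

theorem homogSum_binomConv (x u : A) :
    ∀ m, homogSum u (u + 1) m (binomConv x m) = lucasU ((1 + x) * (u + 1)) (x * (u + 1)) (m + 1)
  | 0 => by simp [homogSum, binomConv, lucasU]
  | 1 => by simp [homogSum, binomConv, lucasU, Nat.sum_antidiagonal_succ]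
  | m + 2 => by
    -- peeling off the `r = 0` term and the vanishing `j = 0` term gives two forms of each sum
    have peel_succ := (homogSum_succ u (u + 1) (m + 1) (binomConv x (m + 1))).symm.trans
      (homogSum_succ_of_eq_zero u (u + 1) (binomConv_of_lt x (by omega : m + 1 < m + 2)))
    have peel' := homogSum_succ_of_eq_zero u (u + 1) (binomConv_of_lt x (by omega : m < m + 1))
    have peel := (homogSum_succ u (u + 1) (m + 1) (binomConv x m)).symm.trans
      ((homogSum_succ_of_eq_zero u (u + 1) (binomConv_of_lt x (by omega : m < m + 2))).trans
        (congrArg _ peel'))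
    have hrec : homogSum u (u + 1) (m + 1) (fun r => binomConv x (m + 2) (r + 1)) =
        (1 + x) * homogSum u (u + 1) (m + 1) (fun r => binomConv x (m + 1) (r + 1))
          - x * homogSum u (u + 1) (m + 1) (fun r => binomConv x m (r + 1))
          + x * homogSum u (u + 1) (m + 1) (binomConv x m) := by
      simp only [homogSum, mul_sum, ← sum_sub_distrib, ← sum_add_distrib, binomConv_add_two_succ]
      exact sum_congr rfl fun ij _ => by ring
    rw [lucasU, ← homogSum_binomConv x u m, ← homogSum_binomConv x u (m + 1), homogSum_succ,
      hrec, binomConv_add_two_zero]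
    linear_combination (1 + x) * peel_succ - x * peel + x * u * peel'

end Convolution

theorem C_natCast (a b : ℕ) : C a b = a.choose b := by
  unfold C
  split_ifs with h
  · simp
  · rw [Nat.choose_eq_zero_of_lt (by omega), Nat.cast_zero]

theorem C_natCast_sub {a b : ℕ} (h : b ≤ a) (c : ℕ) : C ((a : ℤ) - b) c = (a - b).choose c := by
  rw [← Nat.cast_sub h, C_natCast]

theorem C_eq_zero_of_neg_left {a b : ℤ} (h : a < 0) : C a b = 0 :=
  if_neg (by omega)

theorem C_eq_zero_of_neg_right {a b : ℤ} (h : b < 0) : C a b = 0 :=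
  if_neg (by omega)

def Bsum (n p k : ℕ) : ℚ :=
  ∑ r ∈ range (n + 1), C p r * C ((n : ℤ) - p) r * C ((n : ℤ) - r - 1) ((k : ℤ) - r - 1)

theorem natCast_mul_Bfull (n p k : ℕ) : (k : ℚ) * Bfull n p k = n * Bsum n p k := by
  rcases eq_or_ne k 0 with rfl | hk
  · rw [Nat.cast_zero, zero_mul, Bsum, sum_eq_zero, mul_zero]
    intro r _
    rw [C_eq_zero_of_neg_right (a := (n : ℤ) - r - 1) (by omega), mul_zero]
  · rw [Bfull, if_neg hk, B, ← Bsum]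
    field_simp

theorem X_mul_derivative_monomial {R : Type*} [Semiring R] (k : ℕ) (c : R) :
    X * derivative (monomial k c) = monomial k (c * k) := by
  rcases k with _ | k
  · simp
  · rw [derivative_monomial_succ, X_mul_monomial]
    push_cast
    rfl

theorem eq_of_derivative_eq_of_coeff_zero_eq {R : Type*} [Ring R] [IsAddTorsionFree R]
    {f g : R[X]} (hd : derivative f = derivative g) (h0 : f.coeff 0 = g.coeff 0) : f = g := by
  have h := eq_C_of_derivative_eq_zero (p := f - g) (by rw [derivative_sub, hd, sub_self])
  rwa [coeff_sub, h0, sub_self, map_zero, sub_eq_zero] at h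

section Generating

variable {K : Type*} [Field K]

noncomputable def bfullPoly (n : ℕ) (x : K) : K[X] :=
  ∑ p ∈ range (n + 1), ∑ k ∈ range (n + 1), monomial k ((Bfull n p k : K) * x ^ p)

noncomputable def bsumPoly (n : ℕ) (x : K) : K[X] :=
  ∑ p ∈ range (n + 1), ∑ k ∈ range (n + 1), monomial k ((Bsum n p k : K) * x ^ p)

theorem coeff_bfullPoly_zero {n : ℕ} (hn : 1 ≤ n) (x : K) :
    (bfullPoly n x).coeff 0 = 1 + x ^ n := by
  simp only [bfullPoly, finsetSum_coeff, coeff_monomial, sum_ite_eq', mem_range,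
    Nat.zero_lt_succ, if_true, Bfull]
  rw [sum_eq_add_of_mem 0 n (by simp) (by simp) (by omega) fun p _ hp => by simp [hp]]
  simp

theorem X_mul_derivative_bfullPoly [CharZero K] (n : ℕ) (x : K) :
    X * derivative (bfullPoly n x) = (n : K[X]) * bsumPoly n x := by
  simp only [bfullPoly, bsumPoly, derivative_sum, mul_sum, X_mul_derivative_monomial]
  refine sum_congr rfl fun p _ => sum_congr rfl fun k _ => ?_
  rw [← C_eq_natCast, C_mul_monomial]
  congr 1
  have h := congrArg (Rat.cast : ℚ → K) (natCast_mul_Bfull n p k)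
  push_cast at h
  linear_combination x ^ p * h

theorem sum_monomial_C_eq_ite (n r : ℕ) :
    ∑ k ∈ range (n + 1), monomial k ((C ((n : ℤ) - r - 1) ((k : ℤ) - r - 1) : ℚ) : K) =
      if r < n then X ^ (r + 1) * (X + 1) ^ (n - r - 1) else 0 := by
  ext j
  simp only [finsetSum_coeff, coeff_monomial, sum_ite_eq', mem_range]
  split_ifs with hj hr hr
  · rw [coeff_X_pow_mul', coeff_X_add_one_pow]
    split_ifs with hrj
    · rw [show (n : ℤ) - r - 1 = ((n - r - 1 : ℕ) : ℤ) by omega,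
        show (j : ℤ) - r - 1 = ((j - (r + 1) : ℕ) : ℤ) by omega, C_natCast, Rat.cast_natCast]
    · rw [C_eq_zero_of_neg_right (by omega), Rat.cast_zero]
  · rw [C_eq_zero_of_neg_left (by omega), Rat.cast_zero, coeff_zero]
  · rw [coeff_X_pow_mul', coeff_X_add_one_pow]
    split_ifs with hrj
    · rw [Nat.choose_eq_zero_of_lt (by omega), Nat.cast_zero]
    · rfl
  · rw [coeff_zero]

theorem X_add_one_mul_bsumPoly [CharZero K] {n : ℕ} (hn : 1 ≤ n) (x : K) :
    (X + 1) * bsumPoly n x = X * homogSum X (X + 1) n (binomConv (Polynomial.C x) n) := by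
  have hexp : bsumPoly n x = ∑ r ∈ range (n + 1), ∑ p ∈ range (n + 1),
      Polynomial.C (x ^ p * (C p r * C ((n : ℤ) - p) r : ℚ)) *
        ∑ k ∈ range (n + 1), monomial k ((C ((n : ℤ) - r - 1) ((k : ℤ) - r - 1) : ℚ) : K) := by
    simp only [bsumPoly, Bsum, mul_sum, C_mul_monomial]
    symm
    rw [sum_comm]
    refine sum_congr rfl fun p _ => ?_
    rw [sum_comm]
    refine sum_congr rfl fun k _ => ?_
    push_cast
    rw [sum_mul, map_sum]
    exact sum_congr rfl fun r _ => congrArg _ (by ring)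
  rw [hexp]
  simp only [sum_monomial_C_eq_ite, homogSum, binomConv, Nat.sum_antidiagonal_eq_sum_range_succ_mk,
    mul_sum, sum_mul]
  refine sum_congr rfl fun r hr => sum_congr rfl fun p hp => ?_
  rw [mem_range] at hr hp
  split_ifs with hrn
  · obtain ⟨m, hm⟩ : ∃ m, n - r = m + 1 := ⟨n - r - 1, by omega⟩
    rw [C_natCast, C_natCast_sub (by omega), hm, Nat.add_sub_cancel]
    simp only [map_mul, map_pow, Rat.cast_mul, Rat.cast_natCast, map_natCast]
    ring
  · obtain rfl : r = n := by omega
    rcases (Nat.lt_succ_iff.1 hp).lt_or_eq with hpr | rfl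
    · simp [Nat.choose_eq_zero_of_lt hpr]
    · simp [Nat.choose_eq_zero_of_lt hn]

theorem bfullPoly_eq_lucasV [CharZero K] {n : ℕ} (hn : 1 ≤ n) (x : K) :
    bfullPoly n x = lucasV ((1 + Polynomial.C x) * (X + 1)) (Polynomial.C x * (X + 1)) n := by
  set P : K[X] := (1 + Polynomial.C x) * (X + 1)
  set Q : K[X] := Polynomial.C x * (X + 1)
  refine eq_of_derivative_eq_of_coeff_zero_eq ?_ ?_
  · have hV := mul_derivative_lucasV (e := X + 1) (P := P) (Q := Q)
      (by simp only [P, derivative_mul, derivative_add, derivative_one, derivative_C, derivative_X]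
          ring)
      (by simp only [Q, derivative_mul, derivative_add, derivative_one, derivative_C, derivative_X]
          ring) n
    have hU : homogSum X (X + 1) n (binomConv (Polynomial.C x) n) = lucasU P Q (n + 1) :=
      homogSum_binomConv _ _ n
    refine mul_left_cancel₀ (mul_ne_zero X_ne_zero (X_add_C_ne_zero 1)) ?_
    calc X * (X + 1) * derivative (bfullPoly n x)
        = (n : K[X]) * ((X + 1) * bsumPoly n x) := by
          rw [mul_comm X, mul_assoc, X_mul_derivative_bfullPoly]
          ring
      _ = X * (X + 1) * derivative (lucasV P Q n) := by
          rw [X_add_one_mul_bsumPoly hn, hU, mul_assoc, hV]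
          ring
  · rw [coeff_bfullPoly_zero hn, coeff_zero_eq_eval_zero, ← coe_evalRingHom, map_lucasV,
      lucasV_eq_pow_add_pow (α := 1) (β := x) (by simp [P]) (by simp [Q]), one_pow]

end Generating

theorem stmt_12 (n : ℕ) (hn : 1 ≤ n) (x y : ℝ)
    (hD : 0 ≤ (1 + x) ^ 2 * (1 + y) ^ 2 - 4 * x * (1 + y)) :
    ∑ p ∈ range (n + 1), ∑ k ∈ range (n + 1), (Bfull n p k : ℝ) * x ^ p * y ^ k =
      (2 : ℝ) ^ (-(n : ℤ)) *
        (((1 + x) * (1 + y) + Real.sqrt ((1 + x) ^ 2 * (1 + y) ^ 2 - 4 * x * (1 + y))) ^ n +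
         ((1 + x) * (1 + y) - Real.sqrt ((1 + x) ^ 2 * (1 + y) ^ 2 - 4 * x * (1 + y))) ^ n) := by
  set s := Real.sqrt ((1 + x) ^ 2 * (1 + y) ^ 2 - 4 * x * (1 + y))
  have hs : s ^ 2 = (1 + x) ^ 2 * (1 + y) ^ 2 - 4 * x * (1 + y) := Real.sq_sqrt hD
  calc ∑ p ∈ range (n + 1), ∑ k ∈ range (n + 1), (Bfull n p k : ℝ) * x ^ p * y ^ k
      = (bfullPoly n x).eval y := by simp [bfullPoly, eval_finsetSum, mul_assoc]
    _ = (((1 + x) * (1 + y) + s) / 2) ^ n + (((1 + x) * (1 + y) - s) / 2) ^ n := by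
      rw [bfullPoly_eq_lucasV hn, ← coe_evalRingHom, map_lucasV]
      refine lucasV_eq_pow_add_pow ?_ ?_ n
      · simp only [coe_evalRingHom, eval_mul, eval_add, eval_one, eval_C, eval_X]
        ring
      · simp only [coe_evalRingHom, eval_mul, eval_add, eval_one, eval_C, eval_X]
        linear_combination -hs / 4
    _ = _ := by rw [zpow_neg, zpow_natCast, div_pow, div_pow]; ring
end

section
/- For positive integers n, p, k with 1 ≤ k ≤ n and 1 ≤ p ≤ n, B(n,p,k) = (n/p) · Σ_{i=0}^{k-1} C(n-p+i, n-p)·C(p, i+1)·C(n-p, k-i-1), where B(n,p,k) = (n/k)·Σ_{r≥0} C(p,r)·C(n-p,r)·C(n-r-1,k-r-1). -/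
/-!
Put `q = n - p`; after clearing denominators the claim is
`p · Σ_r C(p,r) C(q,r) C(p+q-r-1, k-r-1) = k · Σ_i C(q+i,q) C(p,i+1) C(q,k-i-1)`.
For `q ≥ 1`, Vandermonde's identity `C(p+q-r-1, k-r-1) = Σ_j C(p-r, j-r) C(q-1, k-j-1)`, the
identity `C(p,r) C(p-r,j-r) = C(p,j) C(j,r)` and a second Vandermonde summation over `r` turn the
left sum into `Σ_j C(p,j) C(q+j,j) C(q-1,k-j-1)`. Pascal's rule on `C(p,j)` followed by an index
shift, and on the right the splitting `k = (i+1) + (k-i-1)` with each part absorbed into a binomial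
coefficient, bring both sides to the same sum `p · Σ_i C(p-1,i) (⋯)`, term by term.
For `q = 0` both sides reduce to `p · C(p-1,k-1) = k · C(p,k)`.
-/

open Finset

@[norm_cast]
lemma C_natCast_s14 (x y : ℕ) : C x y = x.choose y := by
  unfold C
  split_ifs with h
  · simp
  · rw [Nat.choose_eq_zero_of_lt (by omega), Nat.cast_zero]

lemma C_of_neg {a b : ℤ} (hb : b < 0) : C a b = 0 :=
  if_neg fun h => by omega

lemma C_of_lt {a b : ℤ} (h : a < b) : C a b = 0 :=
  if_neg fun h' => by omega

lemma C_zero_right {a : ℤ} (ha : 0 ≤ a) : C a 0 = 1 := by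
  simp [C, ha]

lemma C_succ_succ (a : ℕ) (b : ℤ) : C (a + 1) (b + 1) = C a b + C a (b + 1) := by
  obtain hb | rfl | hb := lt_trichotomy b (-1)
  · simp only [C_of_neg (by omega : b + 1 < 0), C_of_neg (by omega : b < 0), add_zero]
  · rw [C_of_neg (by norm_num : (-1 : ℤ) < 0), neg_add_cancel, zero_add]
    exact_mod_cast (Nat.choose_zero_right (a + 1)).trans (Nat.choose_zero_right a).symm
  · lift b to ℕ using (by omega)
    exact_mod_cast Nat.choose_succ_succ a b

lemma succ_mul_C_eq (a : ℕ) (b : ℤ) :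
    ((a : ℚ) + 1) * C a b = C (a + 1) (b + 1) * ((b : ℚ) + 1) := by
  obtain hb | rfl | hb := lt_trichotomy b (-1)
  · rw [C_of_neg (by omega : b < 0), C_of_neg (by omega : b + 1 < 0)]; ring
  · rw [C_of_neg (by norm_num : (-1 : ℤ) < 0)]; push_cast; ring
  · lift b to ℕ using (by omega)
    exact_mod_cast Nat.add_one_mul_choose_eq a b

lemma C_succ_right_eq (q i : ℕ) : C (q + i) (i + 1) * ((i : ℚ) + 1) = C (q + i) i * q := by
  have h := Nat.choose_succ_right_eq (q + i) i
  rw [Nat.add_sub_cancel] at h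
  exact_mod_cast h

lemma C_symm_add (q i : ℕ) : C (q + i) q = C (q + i) i := by
  exact_mod_cast Nat.choose_symm_add

lemma C_symm (a : ℕ) (b : ℤ) : C a (a - b) = C a b := by
  obtain hb | hb := lt_or_ge b 0
  · rw [C_of_neg hb, C_of_lt (by omega)]
  obtain hba | hab := le_or_gt b a
  · lift b to ℕ using hb
    rw [← Nat.cast_sub (by omega)]
    exact_mod_cast Nat.choose_symm (by omega)
  · rw [C_of_neg (by omega), C_of_lt hab]

lemma C_mul_C_sub (p j r : ℕ) : C p r * C ((p : ℤ) - r) ((j : ℤ) - r) = C p j * C j r := by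
  obtain hjr | hrj := lt_or_ge j r
  · rw [C_of_neg (by omega : (j : ℤ) - r < 0), C_of_lt (by omega : (j : ℤ) < r)]; ring
  obtain hjp | hpj := le_or_gt j p
  · rw [← Nat.cast_sub (by omega : r ≤ p), ← Nat.cast_sub hrj]
    exact_mod_cast (Nat.choose_mul hrj).symm
  rw [C_of_lt (by omega : (p : ℤ) < j)]
  obtain hrp | hpr := le_or_gt r p
  · rw [C_of_lt (by omega : (p : ℤ) - r < j - r)]; ring
  · rw [C_of_lt (by omega : (p : ℤ) < r)]; ring

lemma C_add_eq_sum_range (a b : ℕ) {m : ℤ} {N : ℕ} (hN : m < N) :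
    C (a + b) m = ∑ t ∈ range N, C a t * C b (m - t) := by
  obtain hm | hm := lt_or_ge m 0
  · rw [C_of_neg hm]
    exact (sum_eq_zero fun t _ => by rw [C_of_neg (by omega : m - t < 0), mul_zero]).symm
  lift m to ℕ using hm
  calc C (a + b) m = ∑ t ∈ range (m + 1), (a.choose t * b.choose (m - t) : ℚ) := by
        have h := Nat.add_choose_eq a b m
        rw [Finset.Nat.sum_antidiagonal_eq_sum_range_succ_mk] at h
        exact_mod_cast h
    _ = ∑ t ∈ range (m + 1), C a t * C b (m - t) := sum_congr rfl fun t ht => by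
        rw [← Nat.cast_sub (by rw [mem_range] at ht; omega)]
        norm_cast
    _ = ∑ t ∈ range N, C a t * C b (m - t) := sum_subset (range_subset_range.2 (by omega))
        fun t _ ht => by rw [C_of_neg (by rw [mem_range] at ht; omega : (m : ℤ) - t < 0), mul_zero]

lemma C_add_eq_sum_range_shift (a b c : ℕ) {m : ℤ} {N : ℕ} (hN : m + c < N) :
    C (a + b) m = ∑ j ∈ range N, C a (j - c) * C b (m + c - j) := by
  have hlow : ∀ j < c, C a (j - c) * C b (m + c - j) = 0 := fun j hj => by
    rw [C_of_neg (by omega : (j : ℤ) - c < 0), zero_mul]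
  obtain hNc | hcN := lt_or_ge N c
  · rw [C_of_neg (by omega : m < 0)]
    exact (sum_eq_zero fun j hj => hlow j ((mem_range.1 hj).trans hNc)).symm
  obtain ⟨N, rfl⟩ : ∃ N', N = c + N' := ⟨N - c, by omega⟩
  rw [sum_range_add, sum_eq_zero fun j hj => hlow j (mem_range.1 hj), zero_add,
    C_add_eq_sum_range a b (N := N) (by omega)]
  refine sum_congr rfl fun t _ => ?_
  push_cast
  ring_nf

lemma sum_range_C_mul_C (q j : ℕ) {N : ℕ} (hj : j < N) :
    ∑ r ∈ range N, C j r * C q r = C (q + j) j := by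
  rw [C_add_eq_sum_range q j (by exact_mod_cast hj)]
  exact sum_congr rfl fun r _ => by rw [C_symm, mul_comm]

lemma C_mul_C_add_sub_eq_sum (p b r k : ℕ) :
    C p r * C (p + b - r) (k - r - 1) = ∑ j ∈ range k, C p j * C j r * C b (k - j - 1) := by
  obtain hrp | hpr := le_or_gt r p
  · have hsplit : (p + b - r : ℤ) = ((p - r : ℕ) : ℤ) + b := by push_cast [hrp]; ring
    rw [hsplit, C_add_eq_sum_range_shift (p - r) b r (N := k) (by omega), mul_sum]
    refine sum_congr rfl fun j _ => ?_
    rw [Nat.cast_sub hrp, ← C_mul_C_sub p j r]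
    ring_nf
  · simp only [C_of_lt (by omega : (p : ℤ) < r), zero_mul]
    refine (sum_eq_zero fun j _ => ?_).symm
    rw [← C_mul_C_sub p j r, C_of_lt (by omega : (p : ℤ) < r)]
    ring

lemma sum_range_C_mul_C_mul_C_add_sub (p b k : ℕ) :
    ∑ r ∈ range k, C p r * C (b + 1) r * C (p + b - r) (k - r - 1)
      = ∑ j ∈ range k, C p j * (C (b + 1 + j) j * C b (k - j - 1)) := by
  calc _ = ∑ r ∈ range k, ∑ j ∈ range k, C p j * C b (k - j - 1) * (C j r * C (b + 1) r) := by
        refine sum_congr rfl fun r _ => ?_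
        rw [mul_right_comm, C_mul_C_add_sub_eq_sum, sum_mul]
        exact sum_congr rfl fun j _ => by ring
    _ = ∑ j ∈ range k, C p j * (C (b + 1 + j) j * C b (k - j - 1)) := by
        rw [sum_comm]
        refine sum_congr rfl fun j hj => ?_
        have hvdm := sum_range_C_mul_C (b + 1) j (mem_range.1 hj)
        push_cast at hvdm
        rw [← mul_sum, hvdm]
        ring

lemma sum_range_C_succ_mul (a k : ℕ) (f : ℕ → ℚ) (hf : f k = 0) :
    ∑ j ∈ range k, C (a + 1) j * f j = ∑ i ∈ range k, C a i * (f i + f (i + 1)) := by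
  have hshift : ∑ j ∈ range k, C a (j - 1) * f j = ∑ i ∈ range k, C a i * f (i + 1) := by
    have h := sum_range_succ' (fun j => C a ((j : ℤ) - 1) * f j) k
    rw [sum_range_succ, hf, mul_zero, add_zero] at h
    simpa [C_of_neg] using h
  calc ∑ j ∈ range k, C (a + 1) j * f j
      = ∑ j ∈ range k, (C a (j - 1) * f j + C a j * f j) := sum_congr rfl fun j _ => by
        have h := C_succ_succ a (j - 1)
        rw [sub_add_cancel] at h
        rw [h, add_mul]
    _ = ∑ i ∈ range k, C a i * (f i + f (i + 1)) := by
        rw [sum_add_distrib, hshift, ← sum_add_distrib]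
        exact sum_congr rfl fun i _ => by ring

lemma succ_mul_sum_range_C_mul_C_mul_C (a b k : ℕ) :
    ((a : ℚ) + 1) * ∑ j ∈ range k, C (a + 1) j * (C (b + 1 + j) j * C b (k - j - 1))
      = k * ∑ i ∈ range k, C (b + 1 + i) (b + 1) * C (a + 1) (i + 1) * C (b + 1) (k - i - 1) := by
  rw [sum_range_C_succ_mul a k _ (by simp [C_of_neg]), mul_sum, mul_sum]
  refine sum_congr rfl fun i _ => ?_
  set m : ℤ := k - i - 1 with hm
  have hk : (k : ℚ) = (i + 1) + m := by push_cast [hm]; ring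
  have pascal₁ : C (b + 1 + i + 1) (i + 1) = C (b + 1 + i) i + C (b + 1 + i) (i + 1) := by
    exact_mod_cast C_succ_succ (b + 1 + i) i
  have pascal₂ : C (b + 1) m = C b (m - 1) + C b m := by simpa using C_succ_succ b (m - 1)
  have absorb₁ : ((a : ℚ) + 1) * C a i = C (a + 1) (i + 1) * (i + 1) := by
    exact_mod_cast succ_mul_C_eq a i
  have absorb₂ : ((b : ℚ) + 1) * C b (m - 1) = C (b + 1) m * m := by
    simpa using succ_mul_C_eq b (m - 1)
  have absorb₃ : C (b + 1 + i) (i + 1) * (i + 1) = C (b + 1 + i) i * (b + 1) := by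
    exact_mod_cast C_succ_right_eq (b + 1) i
  have hsymm : C (b + 1 + i) (b + 1) = C (b + 1 + i) i := by exact_mod_cast C_symm_add (b + 1) i
  push_cast
  rw [show (k : ℤ) - (i + 1) - 1 = m - 1 by omega, ← add_assoc, pascal₁, hsymm, hk]
  -- split `k = (i + 1) + m` and absorb the two parts into `C (a + 1) (i + 1)` and `C (b + 1) m`
  linear_combination (C (b + 1 + i) i * C (b + 1) m + C (b + 1 + i) (i + 1) * C b (m - 1)) * absorb₁
    + C (b + 1 + i) i * C (a + 1) (i + 1) * absorb₂ + C (a + 1) (i + 1) * C b (m - 1) * absorb₃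
    - (a + 1) * C a i * C (b + 1 + i) i * pascal₂

lemma succ_mul_sum_eq_mul_sum (a q k : ℕ) :
    ((a : ℚ) + 1) * ∑ r ∈ range k, C (a + 1) r * C q r * C (a + q - r) (k - r - 1)
      = k * ∑ i ∈ range k, C (q + i) q * C (a + 1) (i + 1) * C q (k - i - 1) := by
  rcases q with _ | b
  · rcases k with _ | k
    · simp
    rw [sum_eq_single_of_mem 0 (by simp), sum_eq_single_of_mem k (by simp)]
    · push_cast
      simp only [add_zero, zero_add, sub_zero, add_sub_cancel_right, add_sub_cancel_left, sub_self]
      rw [C_zero_right (by positivity), C_zero_right le_rfl, C_zero_right (by positivity)]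
      linear_combination succ_mul_C_eq a k
    · intro i hi hik
      rw [C_of_lt (by rw [mem_range] at hi; omega : ((0 : ℕ) : ℤ) < (k + 1 : ℕ) - i - 1), mul_zero]
    · intro r _ hr
      rw [C_of_lt (by omega : ((0 : ℕ) : ℤ) < r), mul_zero, zero_mul]
  · have hA := sum_range_C_mul_C_mul_C_add_sub (a + 1) b k
    push_cast at hA ⊢
    rw [← succ_mul_sum_range_C_mul_C_mul_C, ← hA]
    refine congrArg _ (sum_congr rfl fun r _ => ?_)
    ring_nf

lemma mul_sum_eq_mul_sum (n p k : ℕ) (hp : 1 ≤ p) (hpn : p ≤ n) :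
    (p : ℚ) * ∑ r ∈ range k, C p r * C ((n : ℤ) - p) r * C ((n : ℤ) - r - 1) ((k : ℤ) - r - 1)
      = k * ∑ i ∈ range k,
          C ((n : ℤ) - p + i) ((n : ℤ) - p) * C p (i + 1) * C ((n : ℤ) - p) ((k : ℤ) - i - 1) := by
  obtain ⟨a, rfl⟩ : ∃ a, p = a + 1 := ⟨p - 1, by omega⟩
  obtain ⟨q, rfl⟩ : ∃ q, n = a + 1 + q := ⟨n - (a + 1), by omega⟩
  have h := succ_mul_sum_eq_mul_sum a q k
  push_cast at h ⊢
  convert h using 2 <;> exact sum_congr rfl fun r _ => by ring_nf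

theorem stmt_14 (n p k : ℕ) (hk : 1 ≤ k) (hkn : k ≤ n) (hp : 1 ≤ p) (hpn : p ≤ n) :
    B n p k = ((n : ℚ) / p) * ∑ i ∈ range k,
      C ((n : ℤ) - p + i) ((n : ℤ) - p) * C p (i + 1) * C ((n : ℤ) - p) ((k : ℤ) - i - 1) := by
  have htrunc :
      ∑ r ∈ range (n + 1), C p r * C ((n : ℤ) - p) r * C ((n : ℤ) - r - 1) ((k : ℤ) - r - 1)
      = ∑ r ∈ range k, C p r * C ((n : ℤ) - p) r * C ((n : ℤ) - r - 1) ((k : ℤ) - r - 1) :=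
    (sum_subset (range_subset_range.2 (by omega)) fun r _ hr => by
      rw [C_of_neg (by rw [mem_range] at hr; omega : (k : ℤ) - r - 1 < 0), mul_zero]).symm
  have hk0 : (k : ℚ) ≠ 0 := Nat.cast_ne_zero.2 (by omega)
  have hp0 : (p : ℚ) ≠ 0 := Nat.cast_ne_zero.2 (by omega)
  rw [B, htrunc]
  field_simp
  linear_combination (n : ℚ) * mul_sum_eq_mul_sum n p k hp hpn
end
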